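/- arXiv:2602.10646 — 3 statements merged into one kernel-verified Lean document; each statement's English description precedes it below -/
import Mathlib

section
/- For n ≥ 2, the full automorphism group of the thagomizer matroid T_n is isomorphic to the hyperoctahedral group B_n = C_2 ≀ S_n ≅ C_2^n ⋊ S_n, generated by permutations of the n spikes {a_i, b_i} and by the n independent transpositions swapping a_i with b_i. -/
inductive TnEdge (n : ℕ) : Type
  | spine : TnEdge n
  | a (i : Fin n) : TnEdge n
  | b (i : Fin n) : TnEdge n
  deriving DecidableEq, Fintype

open TnEdge

def TnIndep (n : ℕ) (S : Set (TnEdge n)) : Prop :=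
  (∀ i : Fin n, ¬ ({spine, a i, b i} : Set (TnEdge n)) ⊆ S) ∧
  (∀ i j : Fin n, i ≠ j → ¬ ({a i, b i, a j, b j} : Set (TnEdge n)) ⊆ S)

/-- The automorphism group of a matroid: all permutations of the ground type that
preserve independence. -/
def matroidAutGroup {α : Type*} (M : Matroid α) : Subgroup (Equiv.Perm α) where
  carrier := {e | ∀ S : Set α, M.Indep (e '' S) ↔ M.Indep S}
  one_mem' := by intro S; simp
  mul_mem' := by
    intro x y hx hy S
    rw [show ⇑(x * y) = ⇑x ∘ ⇑y from rfl, Set.image_comp]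
    rw [hx, hy]
  inv_mem' := by
    intro x hx S
    have h := (hx (⇑x⁻¹ '' S)).symm
    rwa [show ⇑x '' (⇑x⁻¹ '' S) = S by simp] at h

/-- A permutation of the spikes of the thagomizer matroid. -/
def spikePerm {n : ℕ} (σ : Equiv.Perm (Fin n)) : Equiv.Perm (TnEdge n) where
  toFun e := match e with | spine => spine | a i => a (σ i) | b i => b (σ i)
  invFun e := match e with | spine => spine | a i => a (σ.symm i) | b i => b (σ.symm i)
  left_inv e := by cases e <;> simp
  right_inv e := by cases e <;> simp

/-- The swap of the two edges of the `i`-th spike. -/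
def spikeSwap {n : ℕ} (i : Fin n) : Equiv.Perm (TnEdge n) :=
  Equiv.swap (a i) (b i)

/-- The permutation action of `S_n` on the group `C_2^n`. -/
def permAutHom (n : ℕ) :
    Equiv.Perm (Fin n) →* MulAut (Fin n → Multiplicative (ZMod 2)) where
  toFun σ := MulEquiv.arrowCongr σ (MulEquiv.refl _)
  map_one' := rfl
  map_mul' _ _ := rfl

/-- The hyperoctahedral group `B_n = C_2 ≀ S_n = C_2^n ⋊ S_n`. -/
def hyperoctahedral (n : ℕ) : Type :=
  SemidirectProduct (Fin n → Multiplicative (ZMod 2)) (Equiv.Perm (Fin n)) (permAutHom n)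

noncomputable instance (n : ℕ) : Group (hyperoctahedral n) :=
  inferInstanceAs (Group (SemidirectProduct _ _ _))

/-!
An automorphism permutes the 3-circuits `{e_*, a_i, b_i}`. When `n ≥ 2` two of them meet only
in the spine, so the spine is fixed and the spikes `{a_i, b_i}` are permuted among themselves.
Conversely every permutation fixing the spine and permuting the spikes maps 3-circuits to
3-circuits and the 4-circuits `{a_i, b_i, a_j, b_j}` to 4-circuits. These permutations are
exactly the images of the faithful action of `C₂ⁿ ⋊ Sₙ` in which `f ∈ C₂ⁿ` flips the spikes in
its support and `σ ∈ Sₙ` permutes them.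
-/

open TnEdge

namespace Thagomizer

variable {n : ℕ}

@[simp] lemma spikePerm_spine (σ : Equiv.Perm (Fin n)) : spikePerm σ spine = spine := rfl
@[simp] lemma spikePerm_a (σ : Equiv.Perm (Fin n)) (i : Fin n) : spikePerm σ (a i) = a (σ i) := rfl
@[simp] lemma spikePerm_b (σ : Equiv.Perm (Fin n)) (i : Fin n) : spikePerm σ (b i) = b (σ i) := rfl

def spikePermHom : Equiv.Perm (Fin n) →* Equiv.Perm (TnEdge n) where
  toFun := spikePerm
  map_one' := by ext e; cases e <;> rfl
  map_mul' _ _ := by ext e; cases e <;> rfl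

lemma eq_one_or_eq_ofAdd_one (x : Multiplicative (ZMod 2)) :
    x = 1 ∨ x = Multiplicative.ofAdd 1 := by
  revert x; decide

@[simp] lemma ofAdd_one_mul_ofAdd_one :
    (Multiplicative.ofAdd 1 : Multiplicative (ZMod 2)) * Multiplicative.ofAdd 1 = 1 := rfl

def spikeFlipFun (f : Fin n → Multiplicative (ZMod 2)) : TnEdge n → TnEdge n
  | spine => spine
  | a i => if f i = 1 then a i else b i
  | b i => if f i = 1 then b i else a i

lemma spikeFlipFun_involutive (f : Fin n → Multiplicative (ZMod 2)) :
    Function.Involutive (spikeFlipFun f) := by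
  rintro (_ | i | i)
  · rfl
  all_goals by_cases h : f i = 1 <;> simp [spikeFlipFun, h]

def spikeFlip (f : Fin n → Multiplicative (ZMod 2)) : Equiv.Perm (TnEdge n) :=
  (spikeFlipFun_involutive f).toPerm

@[simp] lemma spikeFlip_spine (f : Fin n → Multiplicative (ZMod 2)) :
    spikeFlip f spine = spine := rfl
@[simp] lemma spikeFlip_a (f : Fin n → Multiplicative (ZMod 2)) (i : Fin n) :
    spikeFlip f (a i) = if f i = 1 then a i else b i := rfl
@[simp] lemma spikeFlip_b (f : Fin n → Multiplicative (ZMod 2)) (i : Fin n) :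
    spikeFlip f (b i) = if f i = 1 then b i else a i := rfl

def spikeFlipHom : (Fin n → Multiplicative (ZMod 2)) →* Equiv.Perm (TnEdge n) where
  toFun := spikeFlip
  map_one' := by ext e; cases e <;> simp
  map_mul' f g := by
    ext e
    rcases e with _ | i | i <;> try rfl
    all_goals
      rcases eq_one_or_eq_ofAdd_one (f i) with hf | hf <;>
      rcases eq_one_or_eq_ofAdd_one (g i) with hg | hg <;>
      simp [hf, hg]

lemma spikeFlip_mulSingle (i : Fin n) :
    spikeFlip (Pi.mulSingle i (Multiplicative.ofAdd 1)) = spikeSwap i := by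
  ext e
  rcases e with _ | j | j
  · exact (Equiv.swap_apply_of_ne_of_ne (by simp) (by simp)).symm
  all_goals
    by_cases h : j = i
    · subst h; simp [spikeSwap]
    · simp [spikeSwap, h, Equiv.swap_apply_of_ne_of_ne]

lemma spikeFlip_mul_spikePerm (f : Fin n → Multiplicative (ZMod 2)) (σ : Equiv.Perm (Fin n)) :
    spikeFlip (f ∘ σ.symm) * spikePerm σ = spikePerm σ * spikeFlip f := by
  ext e
  rcases e with _ | i | i
  · rfl
  all_goals by_cases h : f i = 1 <;> simp [h]

def toPerm (n : ℕ) : hyperoctahedral n →* Equiv.Perm (TnEdge n) :=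
  SemidirectProduct.lift spikeFlipHom spikePermHom fun σ => MonoidHom.ext fun f =>
    eq_mul_inv_of_mul_eq (spikeFlip_mul_spikePerm f σ)

lemma toPerm_apply (x : hyperoctahedral n) :
    toPerm n x = spikeFlip (SemidirectProduct.left x) * spikePerm (SemidirectProduct.right x) :=
  rfl

def spikePair (i : Fin n) : Set (TnEdge n) := {a i, b i}

lemma spikePair_injective : Function.Injective (spikePair (n := n)) := by
  intro i j h
  have : a i ∈ spikePair j := h ▸ Set.mem_insert _ _
  simpa [spikePair] using this

lemma ncard_spikePair (i : Fin n) : (spikePair i).ncard = 2 :=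
  Set.ncard_pair (by simp)

lemma image_spikePair_eq_spikePair_iff (e : TnEdge n → TnEdge n) (i k : Fin n) :
    e '' spikePair i = spikePair k ↔
      e (a i) = a k ∧ e (b i) = b k ∨ e (a i) = b k ∧ e (b i) = a k := by
  rw [spikePair, spikePair, Set.image_pair, Set.pair_eq_pair_iff]

def spikeTriangle (i : Fin n) : Set (TnEdge n) := {spine, a i, b i}

lemma spikeTriangle_eq_insert (i : Fin n) : spikeTriangle i = insert spine (spikePair i) := rfl

lemma spikeTriangle_inter {i j : Fin n} (hij : i ≠ j) :
    spikeTriangle i ∩ spikeTriangle j = {spine} := by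
  ext x
  rcases x with _ | k | k <;> simp [spikeTriangle] <;> omega

lemma spikeSquare_eq_union (i j : Fin n) :
    ({a i, b i, a j, b j} : Set (TnEdge n)) = spikePair i ∪ spikePair j := by
  rw [spikePair, spikePair, Set.insert_union, Set.singleton_union]

def MapsSpikesBy (e : Equiv.Perm (TnEdge n)) (σ : Equiv.Perm (Fin n)) : Prop :=
  e spine = spine ∧ ∀ i, e '' spikePair i = spikePair (σ i)

lemma MapsSpikesBy.mul {e e' : Equiv.Perm (TnEdge n)} {σ σ' : Equiv.Perm (Fin n)}
    (h : MapsSpikesBy e σ) (h' : MapsSpikesBy e' σ') : MapsSpikesBy (e * e') (σ * σ') := by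
  refine ⟨by simp [h.1, h'.1], fun i => ?_⟩
  rw [Equiv.Perm.coe_mul, Set.image_comp, h'.2, h.2]
  rfl

lemma mapsSpikesBy_spikePerm (σ : Equiv.Perm (Fin n)) : MapsSpikesBy (spikePerm σ) σ :=
  ⟨rfl, fun _ => (image_spikePair_eq_spikePair_iff _ _ _).2 (.inl ⟨rfl, rfl⟩)⟩

lemma mapsSpikesBy_spikeFlip (f : Fin n → Multiplicative (ZMod 2)) :
    MapsSpikesBy (spikeFlip f) 1 := by
  refine ⟨rfl, fun i => (image_spikePair_eq_spikePair_iff _ _ _).2 ?_⟩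
  by_cases h : f i = 1 <;> simp [h]

lemma mapsSpikesBy_toPerm (x : hyperoctahedral n) :
    MapsSpikesBy (toPerm n x) (SemidirectProduct.right x) := by
  have h := (mapsSpikesBy_spikeFlip (SemidirectProduct.left x)).mul
    (mapsSpikesBy_spikePerm (SemidirectProduct.right x))
  rwa [one_mul] at h

lemma toPerm_injective : Function.Injective (toPerm n) := by
  refine (injective_iff_map_eq_one _).2 fun x hx => ?_
  have hright : SemidirectProduct.right x = 1 := Equiv.ext fun i => spikePair_injective <| by
    rw [← (mapsSpikesBy_toPerm x).2 i, hx, Equiv.Perm.coe_one, Set.image_id]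
    rfl
  have hleft : SemidirectProduct.left x = 1 := funext fun i => by
    have hai := congr($hx (a i))
    rw [toPerm_apply, hright] at hai
    simpa using hai
  exact SemidirectProduct.ext hleft hright

lemma MapsSpikesBy.mem_range_toPerm {e : Equiv.Perm (TnEdge n)} {σ : Equiv.Perm (Fin n)}
    (h : MapsSpikesBy e σ) : e ∈ (toPerm n).range := by
  classical
  let flips : Fin n → Multiplicative (ZMod 2) := fun k =>
    if e (a (σ.symm k)) = a k then 1 else Multiplicative.ofAdd 1
  refine ⟨SemidirectProduct.mk flips σ, ?_⟩
  change spikeFlip flips * spikePerm σ = e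
  ext x
  rcases x with _ | i | i
  · exact h.1.symm
  all_goals
    rcases (image_spikePair_eq_spikePair_iff _ _ _).1 (h.2 i) with ⟨ha, hb⟩ | ⟨ha, hb⟩ <;>
      simp [flips, ha, hb]

lemma MapsSpikesBy.tnIndep_image_iff {e : Equiv.Perm (TnEdge n)} {σ : Equiv.Perm (Fin n)}
    (h : MapsSpikesBy e σ) (S : Set (TnEdge n)) : TnIndep n (e '' S) ↔ TnIndep n S := by
  have triangle (i : Fin n) :
      e '' {spine, a i, b i} = ({spine, a (σ i), b (σ i)} : Set (TnEdge n)) := by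
    rw [Set.image_insert_eq, h.1]
    exact congrArg _ (h.2 i)
  have square (i j : Fin n) :
      e '' {a i, b i, a j, b j} = ({a (σ i), b (σ i), a (σ j), b (σ j)} : Set (TnEdge n)) := by
    rw [spikeSquare_eq_union, Set.image_union, h.2, h.2, spikeSquare_eq_union]
  refine and_congr ?_ ?_
  · rw [← σ.forall_congr_right]
    simp only [← triangle, Set.image_subset_image_iff e.injective]
  · rw [← σ.forall_congr_right]
    refine forall_congr' fun i => ?_
    rw [← σ.forall_congr_right]
    simp only [σ.injective.ne_iff, ← square, Set.image_subset_image_iff e.injective]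

lemma exists_spikeTriangle_subset {S : Set (TnEdge n)} (hS : S.ncard ≤ 3)
    (h : ¬ TnIndep n S) : ∃ k, spikeTriangle k ⊆ S := by
  simp only [TnIndep, not_and_or, not_forall, not_not] at h
  rcases h with ⟨k, hk⟩ | ⟨k, l, hkl, hsub⟩
  · exact ⟨k, hk⟩
  · rw [spikeSquare_eq_union] at hsub
    have hdisj : Disjoint (spikePair k) (spikePair l) := by simp [spikePair, hkl.symm]
    have := Set.ncard_le_ncard hsub
    rw [Set.ncard_union_eq hdisj, ncard_spikePair, ncard_spikePair] at this
    omega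

lemma apply_spine_eq_spine (hn : 2 ≤ n) {e : Equiv.Perm (TnEdge n)}
    (h : ∀ i, ∃ k, spikeTriangle k ⊆ e '' spikeTriangle i) : e spine = spine := by
  obtain ⟨k, hk⟩ := h ⟨0, by omega⟩
  obtain ⟨l, hl⟩ := h ⟨1, by omega⟩
  have : spine ∈ e '' {spine} := by
    rw [← spikeTriangle_inter (i := ⟨0, by omega⟩) (j := ⟨1, by omega⟩) (by simp),
      Set.image_inter e.injective]
    exact ⟨hk (Set.mem_insert _ _), hl (Set.mem_insert _ _)⟩
  simpa [eq_comm] using this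

lemma image_spikePair_eq_spikePair {e : Equiv.Perm (TnEdge n)} {i k : Fin n}
    (hspine : e spine = spine) (h : spikeTriangle k ⊆ e '' spikeTriangle i) :
    e '' spikePair i = spikePair k := by
  have hsub : spikePair k ⊆ e '' spikePair i := by
    intro x hx
    have hx' : x ∈ insert spine (e '' spikePair i) := by
      rw [← hspine, ← Set.image_insert_eq]
      exact h (Set.mem_insert_of_mem _ hx)
    refine hx'.resolve_left ?_
    rintro rfl
    simp [spikePair] at hx
  refine (Set.eq_of_subset_of_ncard_le hsub ?_).symm
  rw [Set.ncard_image_of_injective _ e.injective, ncard_spikePair, ncard_spikePair]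

lemma exists_mapsSpikesBy (hn : 2 ≤ n) {e : Equiv.Perm (TnEdge n)}
    (he : ∀ S, TnIndep n (e '' S) → TnIndep n S) : ∃ σ, MapsSpikesBy e σ := by
  have triangle (i : Fin n) : ∃ k, spikeTriangle k ⊆ e '' spikeTriangle i := by
    refine exists_spikeTriangle_subset ?_ fun hi => (he _ hi).1 i subset_rfl
    rw [Set.ncard_image_of_injective _ e.injective, spikeTriangle_eq_insert]
    exact (Set.ncard_insert_le _ _).trans (by rw [ncard_spikePair])
  have hspine := apply_spine_eq_spine hn triangle
  choose σ hσ using fun i => (triangle i).imp fun _ => image_spikePair_eq_spikePair hspine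
  have hinj : Function.Injective σ := fun i j hij =>
    spikePair_injective <| Set.image_injective.2 e.injective <| by rw [hσ, hσ, hij]
  exact ⟨Equiv.ofBijective σ hinj.bijective_of_finite, hspine, hσ⟩

lemma range_toPerm_eq_closure :
    (toPerm n).range = Subgroup.closure (Set.range spikePerm ∪ Set.range spikeSwap) := by
  refine le_antisymm ?_ ((Subgroup.closure_le _).2 ?_)
  · rintro _ ⟨x, rfl⟩
    rw [toPerm_apply]
    refine mul_mem ?_ (Subgroup.subset_closure (.inl ⟨_, rfl⟩))
    change spikeFlipHom (SemidirectProduct.left x) ∈ _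
    induction SemidirectProduct.left x using Pi.mulSingle_induction with
    | one => rw [map_one]; exact one_mem _
    | mul f g hf hg => rw [map_mul]; exact mul_mem hf hg
    | mulSingle i m =>
      rcases eq_one_or_eq_ofAdd_one m with rfl | rfl
      · rw [Pi.mulSingle_one, map_one]; exact one_mem _
      · exact Subgroup.subset_closure (.inr ⟨i, (spikeFlip_mulSingle i).symm⟩)
  · rintro _ (⟨σ, rfl⟩ | ⟨i, rfl⟩)
    · exact ⟨SemidirectProduct.inr σ, SemidirectProduct.lift_inr _ _ _ σ⟩
    · exact ⟨SemidirectProduct.inl (Pi.mulSingle i (Multiplicative.ofAdd 1)),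
        (SemidirectProduct.lift_inl _ _ _ _).trans (spikeFlip_mulSingle i)⟩

end Thagomizer

open Thagomizer in
theorem thagomizer_aut_group_general (n : ℕ) (hn : 2 ≤ n) (M : Matroid (TnEdge n))
    (hInd : ∀ S, M.Indep S ↔ TnIndep n S) :
    matroidAutGroup M =
      Subgroup.closure (Set.range (spikePerm (n := n)) ∪ Set.range (spikeSwap (n := n))) ∧
    Nonempty (matroidAutGroup M ≃* hyperoctahedral n) := by
  have hrange : (toPerm n).range = matroidAutGroup M := by
    refine le_antisymm ?_ fun e he => ?_
    · rintro _ ⟨x, rfl⟩ S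
      simpa only [hInd] using (mapsSpikesBy_toPerm x).tnIndep_image_iff S
    · obtain ⟨σ, hσ⟩ := exists_mapsSpikesBy hn fun S => by simpa only [hInd] using (he S).1
      exact hσ.mem_range_toPerm
  exact ⟨hrange.symm.trans range_toPerm_eq_closure,
    ⟨((MonoidHom.ofInjective toPerm_injective).trans (MulEquiv.subgroupCongr hrange)).symm⟩⟩

theorem thagomizer_aut_group (n : ℕ) (hn : 2 ≤ n) (M : Matroid (TnEdge n))
    (hE : M.E = Set.univ) (hInd : ∀ S, M.Indep S ↔ TnIndep n S) :
    matroidAutGroup M =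
      Subgroup.closure (Set.range (spikePerm (n := n)) ∪ Set.range (spikeSwap (n := n))) ∧
    Nonempty (matroidAutGroup M ≃* hyperoctahedral n) :=
  thagomizer_aut_group_general n hn M hInd
end

section
/- For the contraction of T_n by the flat F_k^{II} = {e_*} ∪ {a_1, b_1, ..., a_k, b_k}: the contraction T_n / F_k^{II} is a direct sum of n − k rank-one matroids (each a parallel pair {a_i, b_i} for i > k), and hence its lattice of flats is a Boolean lattice of rank n − k. -/
open TnEdge

/-- The rank of a set in a matroid: the largest size of an independent subset. -/
noncomputable def mRank {α : Type*} (M : Matroid α) (S : Set α) : ℕ :=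
  sSup (Set.ncard '' {I | I ⊆ S ∧ M.Indep I})

/-- The representative flat `F_k^{II} = {e_*} ∪ {a_1, b_1, …, a_k, b_k}`. -/
def FkII (n k : ℕ) : Set (TnEdge n) :=
  {spine} ∪ {e | ∃ i : Fin n, (i : ℕ) < k ∧ (e = a i ∨ e = b i)}

/-- The rank function of the contraction `M / C`: `A ↦ r(A ∪ C) − r(C)`. -/
noncomputable def cRank {α : Type*} (M : Matroid α) (C : Set α) (A : Set α) : ℕ :=
  mRank M (A ∪ C) - mRank M C

/-- Independence in the contraction `M / C`. -/
def cIndep {α : Type*} (M : Matroid α) (C : Set α) (I : Set α) : Prop :=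
  I ⊆ M.E \ C ∧ mRank M (I ∪ C) = I.ncard + mRank M C

/-- The flats of the contraction `M / C`, viewed inside the ground set of `M / C`. -/
def cFlat {α : Type*} (M : Matroid α) (C : Set α) (G : Set α) : Prop :=
  Disjoint G C ∧ M.IsFlat (G ∪ C)

/-!
Every circuit of `T_n`, a triangle `{e_*, a i, b i}` or a square `{a i, b i, a j, b j}`, contains
a whole spike `{a i, b i}`, so a set containing `e_*` is independent exactly when it meets each
spike at most once. Hence such a set has rank `1 +` the number of spikes it meets, and it is a flat
exactly when it is a union of spikes together with `e_*`. After contracting such a flat `C`, a set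
disjoint from `C` is independent iff it meets each remaining spike at most once: the contraction
is the direct sum of the remaining spikes, each a parallel pair, and its flats are the unions of
remaining spikes.
-/

open Set Function

lemma mRank_eq_ncard_of_isBasis {α : Type*} [Finite α] {M : Matroid α} {B X : Set α}
    (hB : M.IsBasis B X) : mRank M X = B.ncard := by
  refine IsGreatest.csSup_eq ⟨⟨B, ⟨hB.subset, hB.indep⟩, rfl⟩, ?_⟩
  rintro _ ⟨I, ⟨hIX, hI⟩, rfl⟩
  have hle : I.encard ≤ B.encard := hB.encard_eq_eRk ▸ hI.encard_le_eRk_of_subset hIX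
  rwa [← I.toFinite.cast_ncard_eq, ← B.toFinite.cast_ncard_eq, Nat.cast_le] at hle

namespace TnEdge

variable {n : ℕ}

def spike : TnEdge n → Option (Fin n)
  | spine => none
  | a i => some i
  | b i => some i

lemma spike_surjective : Surjective (spike (n := n))
  | none => ⟨spine, rfl⟩
  | some i => ⟨a i, rfl⟩

lemma injOn_spike_iff {S : Set (TnEdge n)} :
    InjOn spike S ↔ ∀ i, ¬ (a i ∈ S ∧ b i ∈ S) := by
  constructor
  · rintro h i ⟨ha, hb⟩
    cases h ha hb rfl
  · intro h x hx y hy hxy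
    cases x <;> cases y <;> simp_all [spike]

lemma tnIndep_iff_injOn {S : Set (TnEdge n)} (hS : spine ∈ S) :
    TnIndep n S ↔ InjOn spike S := by
  rw [injOn_spike_iff]
  refine ⟨fun h i hi => h.1 i (insert_subset hS (pair_subset hi.1 hi.2)), fun h => ⟨?_, ?_⟩⟩
  · exact fun i hi => h i ⟨hi (by simp), hi (by simp)⟩
  · exact fun i _ _ hi => h i ⟨hi (by simp), hi (by simp)⟩

lemma injOn_spike_diff_image_b (X : Set (TnEdge n)) :
    InjOn spike (X \ b '' (a ⁻¹' X)) :=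
  injOn_spike_iff.2 fun i ⟨⟨hai, _⟩, _, hbi⟩ => hbi ⟨i, hai, rfl⟩

lemma image_spike_diff_image_b (X : Set (TnEdge n)) :
    spike '' (X \ b '' (a ⁻¹' X)) = spike '' X := by
  refine (image_mono sdiff_subset).antisymm ?_
  rintro _ ⟨e, heX, rfl⟩
  by_cases he : e ∈ b '' (a ⁻¹' X)
  · obtain ⟨i, hai, rfl⟩ := he
    exact ⟨a i, ⟨hai, by simp⟩, rfl⟩
  · exact mem_image_of_mem _ ⟨heX, he⟩

lemma spine_mem_diff_image_b {X : Set (TnEdge n)} (hX : spine ∈ X) :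
    spine ∈ X \ b '' (a ⁻¹' X) :=
  ⟨hX, by simp⟩

section Matroid

variable {M : Matroid (TnEdge n)}

lemma isBasis_diff_image_b (hE : M.E = univ) (hInd : ∀ S, M.Indep S ↔ TnIndep n S)
    {X : Set (TnEdge n)} (hX : spine ∈ X) : M.IsBasis (X \ b '' (a ⁻¹' X)) X := by
  have hspine := spine_mem_diff_image_b hX
  refine Matroid.Indep.isBasis_of_forall_insert ?_ sdiff_subset ?_
  · rw [hInd, tnIndep_iff_injOn hspine]
    exact injOn_spike_diff_image_b X
  · rintro e ⟨heX, heB⟩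
    obtain ⟨i, hai, rfl⟩ : e ∈ b '' (a ⁻¹' X) := by simpa [heX] using heB
    refine ⟨?_, by simp [hE]⟩
    rw [hInd, tnIndep_iff_injOn (mem_insert_of_mem _ hspine), injOn_spike_iff]
    exact fun h => h i ⟨mem_insert_of_mem _ ⟨hai, by simp⟩, mem_insert _ _⟩

lemma mRank_eq_ncard_image_spike (hE : M.E = univ) (hInd : ∀ S, M.Indep S ↔ TnIndep n S)
    {X : Set (TnEdge n)} (hX : spine ∈ X) : mRank M X = (spike '' X).ncard := by
  rw [mRank_eq_ncard_of_isBasis (isBasis_diff_image_b hE hInd hX), ← image_spike_diff_image_b,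
    (injOn_spike_diff_image_b X).ncard_image]

lemma mem_closure_iff_spike_mem (hE : M.E = univ) (hInd : ∀ S, M.Indep S ↔ TnIndep n S)
    {X : Set (TnEdge n)} (hX : spine ∈ X) {e : TnEdge n} :
    e ∈ M.closure X ↔ spike e ∈ spike '' X := by
  have hB := isBasis_diff_image_b hE hInd hX
  rw [← hB.closure_eq_closure, hB.indep.mem_closure_iff', ← image_spike_diff_image_b]
  by_cases he : e ∈ X \ b '' (a ⁻¹' X)
  · exact iff_of_true ⟨by simp [hE], fun _ => he⟩ (mem_image_of_mem _ he)
  · rw [hInd, tnIndep_iff_injOn (mem_insert_of_mem _ (spine_mem_diff_image_b hX)),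
      injOn_insert he]
    simp only [hE, mem_univ, true_and, he, imp_false, not_and, not_not]
    exact ⟨fun h => h (injOn_spike_diff_image_b X), fun h _ => h⟩

lemma isFlat_iff_preimage_image_spike_subset (hE : M.E = univ)
    (hInd : ∀ S, M.Indep S ↔ TnIndep n S) {X : Set (TnEdge n)} (hX : spine ∈ X) :
    M.IsFlat X ↔ spike ⁻¹' (spike '' X) ⊆ X := by
  rw [Matroid.isFlat_iff_closure_eq, subset_antisymm_iff,
    and_iff_left (M.subset_closure X (by simp [hE]))]
  exact forall_congr' fun e => imp_congr_left (mem_closure_iff_spike_mem hE hInd hX)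

variable {K : Set (Option (Fin n))}

lemma mRank_preimage_spike (hE : M.E = univ) (hInd : ∀ S, M.Indep S ↔ TnIndep n S)
    (hK : none ∈ K) : mRank M (spike ⁻¹' K) = K.ncard := by
  rw [mRank_eq_ncard_image_spike hE hInd hK, image_preimage_eq K spike_surjective]

lemma mRank_union_preimage_spike (hE : M.E = univ) (hInd : ∀ S, M.Indep S ↔ TnIndep n S)
    (hK : none ∈ K) {I : Set (TnEdge n)} (hI : Disjoint I (spike ⁻¹' K)) :
    mRank M (I ∪ spike ⁻¹' K) = (spike '' I).ncard + K.ncard := by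
  rw [mRank_eq_ncard_image_spike hE hInd (Or.inr hK), image_union,
    image_preimage_eq K spike_surjective, ncard_union_eq (disjoint_image_left.2 hI)]

lemma cRank_preimage_spike (hE : M.E = univ) (hInd : ∀ S, M.Indep S ↔ TnIndep n S)
    (hK : none ∈ K) {I : Set (TnEdge n)} (hI : Disjoint I (spike ⁻¹' K)) :
    cRank M (spike ⁻¹' K) I = (spike '' I).ncard := by
  rw [cRank, mRank_union_preimage_spike hE hInd hK hI, mRank_preimage_spike hE hInd hK,
    Nat.add_sub_cancel]

lemma cIndep_preimage_spike_iff (hE : M.E = univ) (hInd : ∀ S, M.Indep S ↔ TnIndep n S)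
    (hK : none ∈ K) {I : Set (TnEdge n)} (hI : I ⊆ M.E \ spike ⁻¹' K) :
    cIndep M (spike ⁻¹' K) I ↔ InjOn spike I := by
  rw [cIndep, and_iff_right hI, mRank_union_preimage_spike hE hInd hK (subset_sdiff.1 hI).2,
    mRank_preimage_spike hE hInd hK, Nat.add_right_cancel_iff, ncard_image_iff]

lemma cFlat_preimage_spike_iff (hE : M.E = univ) (hInd : ∀ S, M.Indep S ↔ TnIndep n S)
    (hK : none ∈ K) {G : Set (TnEdge n)} :
    cFlat M (spike ⁻¹' K) G ↔ ∃ T ⊆ Kᶜ, spike ⁻¹' T = G := by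
  constructor
  · rintro ⟨hdisj, hflat⟩
    have hGK : spike '' G ⊆ Kᶜ :=
      subset_compl_iff_disjoint_right.2 (disjoint_image_left.2 hdisj)
    refine ⟨spike '' G, hGK, (subset_preimage_image spike G).antisymm' fun e he => ?_⟩
    have heGC : e ∈ G ∪ spike ⁻¹' K :=
      (isFlat_iff_preimage_image_spike_subset hE hInd (Or.inr hK)).1 hflat
        (image_mono subset_union_left he)
    exact heGC.resolve_right (hGK he)
  · rintro ⟨T, hT, rfl⟩
    refine ⟨(subset_compl_iff_disjoint_right.1 hT).preimage spike, ?_⟩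
    rw [← preimage_union, isFlat_iff_preimage_image_spike_subset hE hInd (Or.inr hK),
      image_preimage_eq _ spike_surjective]

lemma nonempty_cFlat_orderIso_set (hE : M.E = univ) (hInd : ∀ S, M.Indep S ↔ TnIndep n S)
    {ι : Type*} {g : ι → Option (Fin n)} (hg : Injective g) (hnone : none ∉ range g) :
    Nonempty ({G // cFlat M (spike ⁻¹' (range g)ᶜ) G} ≃o Set ι) := by
  let φ : Set ι ↪o Set (TnEdge n) := OrderEmbedding.ofMapLEIff (fun s => spike ⁻¹' (g '' s))
    fun s t => by
      rw [preimage_subset_preimage_iff (by simp [spike_surjective.range_eq]),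
        image_subset_image_iff hg]
  have hflats : {G | cFlat M (spike ⁻¹' (range g)ᶜ) G} = range φ := by
    ext G
    rw [mem_ofPred_eq, cFlat_preimage_spike_iff hE hInd hnone, compl_compl]
    simp [φ, subset_range_iff_exists_image_eq]
  exact ⟨(OrderIso.setCongr _ _ hflats).trans φ.orderIso.symm⟩

end Matroid

def highSpike (k : ℕ) (j : Fin (n - k)) : Option (Fin n) :=
  some ⟨k + j, by omega⟩

lemma highSpike_injective (k : ℕ) : Injective (highSpike (n := n) k) := by
  intro j j' h
  simpa [highSpike, Fin.ext_iff] using h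

@[simp]
lemma exists_highSpike_eq_some {k : ℕ} {i : Fin n} :
    (∃ j, highSpike k j = some i) ↔ k ≤ (i : ℕ) := by
  refine ⟨?_, fun hi => ⟨⟨i - k, by omega⟩, by simp [highSpike, Fin.ext_iff]; omega⟩⟩
  rintro ⟨j, hj⟩
  simp only [highSpike, Option.some_inj] at hj
  simp [← hj]

@[simp]
lemma highSpike_ne_none (k : ℕ) (j : Fin (n - k)) : highSpike k j ≠ none :=
  Option.some_ne_none _

lemma FkII_eq_preimage_spike (k : ℕ) : FkII n k = spike ⁻¹' (range (highSpike k))ᶜ := by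
  ext e
  cases e <;> simp [FkII, spike]

end TnEdge

theorem thagomizer_contract_typeII_general (n k : ℕ)
    (M : Matroid (TnEdge n)) (hE : M.E = Set.univ)
    (hInd : ∀ S, M.Indep S ↔ TnIndep n S) :
    -- the ground set of `T_n / F_k^{II}` consists of the spikes with index `≥ k`
    (M.E \ FkII n k = {e | ∃ i : Fin n, k ≤ (i : ℕ) ∧ (e = a i ∨ e = b i)}) ∧
    -- each remaining spike `{a i, b i}` is a parallel pair of rank one
    (∀ i : Fin n, k ≤ (i : ℕ) →
      cRank M (FkII n k) {a i} = 1 ∧ cRank M (FkII n k) {b i} = 1 ∧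
      cRank M (FkII n k) {a i, b i} = 1) ∧
    -- `T_n / F_k^{II}` is the direct sum of these `n − k` rank-one matroids
    (∀ I : Set (TnEdge n), I ⊆ M.E \ FkII n k →
      (cIndep M (FkII n k) I ↔
        ∀ i : Fin n, ¬ ({a i, b i} : Set (TnEdge n)) ⊆ I)) ∧
    -- hence its lattice of flats is a Boolean lattice of rank `n − k`
    Nonempty ({G : Set (TnEdge n) // cFlat M (FkII n k) G} ≃o Set (Fin (n - k))) := by
  have hnone : none ∉ range (highSpike (n := n) k) := by simp
  rw [FkII_eq_preimage_spike]
  refine ⟨?_, fun i hi => ?_, fun I hI => ?_,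
    nonempty_cFlat_orderIso_set hE hInd (highSpike_injective k) hnone⟩
  · ext e
    cases e <;> simp [hE, spike]
  · have hdisj : Disjoint {a i, b i} (spike ⁻¹' (range (highSpike k))ᶜ) := by
      rw [preimage_compl, disjoint_compl_right_iff_subset, pair_subset_iff]
      simpa [spike] using hi
    refine ⟨?_, ?_, ?_⟩ <;> rw [cRank_preimage_spike hE hInd hnone (hdisj.mono_left ?_)] <;>
      simp [spike, image_pair]
  · rw [cIndep_preimage_spike_iff hE hInd hnone hI, injOn_spike_iff]
    simp [insert_subset_iff]

theorem thagomizer_contract_typeII (n k : ℕ) (hk : k ≤ n)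
    (M : Matroid (TnEdge n)) (hE : M.E = Set.univ)
    (hInd : ∀ S, M.Indep S ↔ TnIndep n S) :
    -- the ground set of `T_n / F_k^{II}` consists of the spikes with index `≥ k`
    (M.E \ FkII n k = {e | ∃ i : Fin n, k ≤ (i : ℕ) ∧ (e = a i ∨ e = b i)}) ∧
    -- each remaining spike `{a i, b i}` is a parallel pair of rank one
    (∀ i : Fin n, k ≤ (i : ℕ) →
      cRank M (FkII n k) {a i} = 1 ∧ cRank M (FkII n k) {b i} = 1 ∧
      cRank M (FkII n k) {a i, b i} = 1) ∧
    -- `T_n / F_k^{II}` is the direct sum of these `n − k` rank-one matroids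
    (∀ I : Set (TnEdge n), I ⊆ M.E \ FkII n k →
      (cIndep M (FkII n k) I ↔
        ∀ i : Fin n, ¬ ({a i, b i} : Set (TnEdge n)) ⊆ I)) ∧
    -- hence its lattice of flats is a Boolean lattice of rank `n − k`
    Nonempty ({G : Set (TnEdge n) // cFlat M (FkII n k) G} ≃o Set (Fin (n - k))) :=
  thagomizer_contract_typeII_general n k M hE hInd
end

section
/- For m ≥ 0 and k ≥ 1, the alternating Pieri sum identity holds in the ring of symmetric functions: ∑_{j=0}^{m} (−1)^j · e_{m−j} · s_{(j+2, 2^{k−1})} = s_{(2^k, 1^m)}, where e_r is the elementary symmetric function and s_λ is the Schur function of the partition λ. -/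
/-- A model of the ring of symmetric functions in infinitely many variables:
the polynomial ring `ℤ[e₁, e₂, e₃, …]` on the elementary symmetric functions,
where the variable `X k` stands for `e_{k+1}`. -/
abbrev SymFn : Type := MvPolynomial ℕ ℤ

/-- The elementary symmetric function `e k`, with the conventions `e 0 = 1` and
`e k = 0` for `k < 0`. -/
noncomputable def esym (k : ℤ) : SymFn :=
  if k < 0 then 0 else if k = 0 then 1 else MvPolynomial.X (k.toNat - 1)

/-- The `i`-th part (1-indexed) of the conjugate of the partition given by the
list `l`: the number of parts of `l` of size at least `i`. -/
def conjPart (l : List ℕ) (i : ℕ) : ℕ := (l.filter (fun x => i ≤ x)).length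

/-- The Schur function of a partition `l` (a weakly decreasing list of naturals),
defined by the dual Jacobi–Trudi determinant
`s_λ = det (e_{λ'_i − i + j})_{1 ≤ i,j ≤ λ₁}`. -/
noncomputable def schur (l : List ℕ) : SymFn :=
  Matrix.det (Matrix.of fun i j : Fin l.headI =>
    esym ((conjPart l (i + 1) : ℤ) + (j : ℤ) - (i : ℤ)))

lemma esym_neg {z : ℤ} (h : z < 0) : esym z = 0 := if_pos h
lemma esym_zero : esym 0 = 1 := rfl
noncomputable def Hd (r : ℕ) : SymFn :=
  Matrix.det (Matrix.of fun i j : Fin r => esym ((j : ℤ) + 1 - (i : ℤ)))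
noncomputable def Gd (r : ℕ) (g : ℕ → SymFn) : SymFn :=
  Matrix.det (Matrix.of fun i j : Fin r =>
    if (i : ℕ) = 0 then g j else esym ((j : ℤ) + 1 - (i : ℤ)))

lemma Gd_succ_succ (r : ℕ) (g : ℕ → SymFn) :
    Gd (r + 2) g = g 0 * Hd (r + 1) - Gd (r + 1) (fun c => g (c + 1)) := by
  rw [Gd, Matrix.det_succ_column_zero, Fin.sum_univ_succ, Fin.sum_univ_succ]
  have h2 : ∀ i : Fin r, ((-1 : SymFn) ^ ((i.succ.succ : Fin (r+2)) : ℕ) *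
      Matrix.of (fun i j : Fin (r+2) =>
        if (i : ℕ) = 0 then g j else esym ((j : ℤ) + 1 - (i : ℤ))) i.succ.succ 0 *
      Matrix.det ((Matrix.of (fun i j : Fin (r+2) =>
        if (i : ℕ) = 0 then g j else esym ((j : ℤ) + 1 - (i : ℤ)))).submatrix
        i.succ.succ.succAbove Fin.succ)) = 0 := by
    intro i
    have hz : (Matrix.of (fun i j : Fin (r+2) =>
        if (i : ℕ) = 0 then g j else esym ((j : ℤ) + 1 - (i : ℤ)))) i.succ.succ 0 = 0 := by
      simp only [Matrix.of_apply, Fin.val_succ]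
      rw [if_neg (by omega)]
      apply esym_neg
      have h0 : ((0 : Fin (r+2)) : ℕ) = 0 := rfl
      rw [h0]
      push_cast
      omega
    rw [hz]; ring
  rw [Finset.sum_eq_zero fun i _ => h2 i]
  have sub0 : ((Matrix.of (fun i j : Fin (r+2) =>
        if (i : ℕ) = 0 then g j else esym ((j : ℤ) + 1 - (i : ℤ)))).submatrix
        (0 : Fin (r+2)).succAbove Fin.succ) =
      Matrix.of (fun i j : Fin (r+1) => esym ((j : ℤ) + 1 - (i : ℤ))) := by
    ext i j
    simp [Matrix.submatrix, Fin.succAbove_zero, Fin.val_succ]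
  have sub1 : ((Matrix.of (fun i j : Fin (r+2) =>
        if (i : ℕ) = 0 then g j else esym ((j : ℤ) + 1 - (i : ℤ)))).submatrix
        ((0 : Fin (r+1)).succ).succAbove Fin.succ) =
      Matrix.of (fun i j : Fin (r+1) =>
        if (i : ℕ) = 0 then g (j + 1) else esym ((j : ℤ) + 1 - (i : ℤ))) := by
    ext i j
    refine Fin.cases ?_ ?_ i
    · have h : ((0 : Fin (r+1)).succ).succAbove (0 : Fin (r+1)) = 0 := by
        simp [Fin.succAbove, Fin.lt_def]
      simp [Matrix.submatrix_apply, h, Fin.val_succ]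
    · intro i
      have h : ((0 : Fin (r+1)).succ).succAbove i.succ = i.succ.succ := by
        simp [Fin.succAbove, Fin.lt_def]
      simp [Matrix.submatrix_apply, h, Fin.val_succ]
  rw [sub0, sub1]
  simp [Hd, Gd, Fin.val_succ, esym_zero]
  ring

lemma Hd_zero : Hd 0 = 1 := Matrix.det_isEmpty
lemma Gd_one (g : ℕ → SymFn) : Gd 1 g = g 0 := by
  simp [Gd, Matrix.det_fin_one]

lemma Gd_sum (r : ℕ) : ∀ g : ℕ → SymFn,
    Gd (r + 1) g = ∑ c ∈ Finset.range (r + 1), (-1) ^ c * g c * Hd (r - c) := by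
  induction r with
  | zero => intro g; simp [Gd_one, Hd_zero]
  | succ r ih =>
    intro g
    rw [Gd_succ_succ, ih,
      Finset.sum_range_succ' (fun c => (-1 : SymFn) ^ c * g c * Hd (r + 1 - c)) (r + 1)]
    have : ∑ i ∈ Finset.range (r + 1), (-1 : SymFn) ^ (i + 1) * g (i + 1) * Hd (r + 1 - (i + 1))
        = -∑ i ∈ Finset.range (r + 1), (-1) ^ i * g (i + 1) * Hd (r - i) := by
      rw [← Finset.sum_neg_distrib]
      apply Finset.sum_congr rfl
      intro i _
      rw [Nat.succ_sub_succ]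
      ring
    rw [this]
    simp only [pow_zero, Nat.sub_zero]
    ring

lemma Hd_eq_Gd (r : ℕ) : Hd (r + 1) = Gd (r + 1) (fun c => esym ((c : ℤ) + 1)) := by
  unfold Hd Gd
  refine congrArg Matrix.det (Matrix.ext fun i j => ?_)
  simp only [Matrix.of_apply]
  by_cases h : (i : ℕ) = 0
  · rw [if_pos h]
    have hz : ((i : ℕ) : ℤ) = 0 := by exact_mod_cast h
    rw [hz, sub_zero]
  · rw [if_neg h]

/-- The e-h relation `∑_{c=0}^{r+1} (-1)^c e_c h_{r+1-c} = 0`. -/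
lemma eh_rel (r : ℕ) :
    ∑ c ∈ Finset.range (r + 2), (-1) ^ c * esym (c : ℤ) * Hd (r + 1 - c) = 0 := by
  have hH : Hd (r + 1) = ∑ c ∈ Finset.range (r + 1),
      (-1) ^ c * esym ((c : ℤ) + 1) * Hd (r - c) := by
    rw [Hd_eq_Gd, Gd_sum]
  rw [Finset.sum_range_succ' (fun c => (-1 : SymFn) ^ c * esym (c : ℤ) * Hd (r + 1 - c)) (r + 1)]
  have : ∑ i ∈ Finset.range (r + 1),
      (-1 : SymFn) ^ (i + 1) * esym ((i + 1 : ℕ) : ℤ) * Hd (r + 1 - (i + 1))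
      = -∑ c ∈ Finset.range (r + 1), (-1) ^ c * esym ((c : ℤ) + 1) * Hd (r - c) := by
    rw [← Finset.sum_neg_distrib]
    apply Finset.sum_congr rfl
    intro i _
    rw [Nat.succ_sub_succ]
    push_cast
    ring
  rw [this, ← hH]
  simp [esym_zero]

lemma neg_one_pow_sub {c r : ℕ} (h : c ≤ r) :
    ((-1 : SymFn)) ^ (r - c) = (-1) ^ r * (-1) ^ c := by
  have : (-1 : SymFn) ^ (r - c) * ((-1) ^ c * (-1) ^ c) = (-1) ^ r * (-1) ^ c := by
    rw [← mul_assoc, ← pow_add, Nat.sub_add_cancel h]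
  simpa [← mul_pow] using this

/-- `∑_t (-1)^t e_{r-t} h_t = δ_{r,0}`. -/
lemma delta_rel (r : ℕ) :
    ∑ t ∈ Finset.range (r + 1), (-1) ^ t * esym ((r - t : ℕ) : ℤ) * Hd t
      = if r = 0 then 1 else 0 := by
  cases r with
  | zero => simp [Hd_zero, esym_zero]
  | succ r =>
    rw [if_neg (Nat.succ_ne_zero r)]
    rw [← Finset.sum_range_reflect]
    simp only [Nat.add_sub_cancel]
    have : ∀ c ∈ Finset.range (r + 2),
        (-1 : SymFn) ^ (r + 1 - c) * esym (((r + 1) - (r + 1 - c) : ℕ) : ℤ) * Hd (r + 1 - c)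
        = (-1) ^ (r + 1) * ((-1) ^ c * esym ((c : ℕ) : ℤ) * Hd (r + 1 - c)) := by
      intro c hc
      have hc' : c ≤ r + 1 := by
        have := Finset.mem_range.1 hc; omega
      rw [neg_one_pow_sub hc', Nat.sub_sub_self hc']
      ring
    rw [Finset.sum_congr rfl this, ← Finset.mul_sum, eh_rel, mul_zero]

lemma Ssum (m : ℕ) (p : ℤ) :
    ∑ j ∈ Finset.range (m + 1),
        (-1) ^ j * esym ((m - j : ℕ) : ℤ) * Gd (j + 1) (fun c => esym (p + (c : ℤ)))
      = esym (p + (m : ℕ)) := by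
  have step1 : ∑ j ∈ Finset.range (m + 1),
        (-1 : SymFn) ^ j * esym ((m - j : ℕ) : ℤ) * Gd (j + 1) (fun c => esym (p + (c : ℤ)))
      = ∑ j ∈ Finset.range (m + 1), ∑ c ∈ Finset.range (j + 1),
        (-1 : SymFn) ^ j * esym ((m - j : ℕ) : ℤ) *
          ((-1) ^ c * esym (p + (c : ℤ)) * Hd (j - c)) := by
    apply Finset.sum_congr rfl
    intro j _
    rw [Gd_sum j (fun c => esym (p + (c : ℤ))), Finset.mul_sum]
  rw [step1]
  rw [Finset.sum_comm' (t' := Finset.range (m + 1))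
    (s' := fun c => Finset.Ico c (m + 1))
    (by intro j c; simp only [Finset.mem_range, Finset.mem_Ico]; omega)]
  have step2 : ∀ c ∈ Finset.range (m + 1),
      (∑ j ∈ Finset.Ico c (m + 1),
        (-1 : SymFn) ^ j * esym ((m - j : ℕ) : ℤ) *
          ((-1) ^ c * esym (p + (c : ℤ)) * Hd (j - c)))
      = esym (p + (c : ℤ)) * (if m - c = 0 then 1 else 0) := by
    intro c hc
    have hcm : c ≤ m := by have := Finset.mem_range.1 hc; omega
    rw [Finset.sum_Ico_eq_sum_range]
    have hrange : m + 1 - c = (m - c) + 1 := by omega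
    rw [hrange]
    have hterm : ∀ t, (-1 : SymFn) ^ (c + t) * esym ((m - (c + t) : ℕ) : ℤ) *
          ((-1) ^ c * esym (p + (c : ℤ)) * Hd ((c + t) - c))
        = esym (p + (c : ℤ)) * ((-1) ^ t * esym (((m - c) - t : ℕ) : ℤ) * Hd t) := by
      intro t
      have h1 : c + t - c = t := by omega
      have h2 : m - (c + t) = (m - c) - t := by omega
      rw [h1, h2, pow_add]
      have hsq : ((-1 : SymFn) ^ c) * ((-1) ^ c) = 1 := by
        rw [← pow_add, ← two_mul, pow_mul]
        norm_num
      linear_combination (esym (((m - c) - t : ℕ) : ℤ) * esym (p + (c : ℤ)) * Hd t *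
        (-1 : SymFn) ^ t) * hsq
    simp only [hterm]
    rw [← Finset.mul_sum, delta_rel]
  rw [Finset.sum_congr rfl step2]
  rw [Finset.sum_eq_single_of_mem m (Finset.self_mem_range_succ m)]
  · simp
  · intro c hc hne
    have : ¬ (m - c = 0) := by
      have := Finset.mem_range.1 hc; omega
    rw [if_neg this, mul_zero]

def conjPart' (l : List ℕ) (i : ℕ) : ℕ := (l.filter (fun x => i ≤ x)).length

lemma conjPart'_cons (x : ℕ) (l : List ℕ) (i : ℕ) :
    conjPart' (x :: l) i = (if i ≤ x then 1 else 0) + conjPart' l i := by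
  by_cases h : i ≤ x <;> simp [conjPart', List.filter_cons, h, Nat.add_comm]

lemma conjPart'_replicate (n a i : ℕ) :
    conjPart' (List.replicate n a) i = if i ≤ a then n else 0 := by
  induction n with
  | zero => simp [conjPart']
  | succ n ih =>
    rw [List.replicate_succ, conjPart'_cons, ih]
    split_ifs <;> omega

lemma conjPart'_append (l1 l2 : List ℕ) (i : ℕ) :
    conjPart' (l1 ++ l2) i = conjPart' l1 i + conjPart' l2 i := by
  simp [conjPart', List.filter_append]

lemma conjPart_eq : conjPart = conjPart' := rfl

lemma schurL (j k : ℕ) (hk : 1 ≤ k) :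
    schur ((j + 2) :: List.replicate (k - 1) 2)
      = esym (k : ℤ) * Gd (j + 1) (fun c => esym ((k : ℤ) + (c : ℤ)))
        - esym ((k : ℤ) - 1) * Gd (j + 1) (fun c => esym ((k : ℤ) + 1 + (c : ℤ))) := by
  set L := (j + 2) :: List.replicate (k - 1) 2 with hLdef
  have hc : ∀ i : ℕ, 1 ≤ i → conjPart L i = if i ≤ 2 then k else if i ≤ j + 2 then 1 else 0 := by
    intro i hi
    rw [hLdef, conjPart_eq, conjPart'_cons, conjPart'_replicate]
    split_ifs <;> omega
  have hA : schur L = Matrix.det (Matrix.of fun i j' : Fin (j + 1 + 1) =>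
      esym ((conjPart L ((i : ℕ) + 1) : ℤ) + (j' : ℤ) - (i : ℤ))) := rfl
  rw [hA, Matrix.det_succ_column_zero, Fin.sum_univ_succ, Fin.sum_univ_succ]
  have h2 : ∀ i : Fin j, ((-1 : SymFn) ^ ((i.succ.succ : Fin (j + 1 + 1)) : ℕ) *
      Matrix.of (fun i j' : Fin (j + 1 + 1) =>
        esym ((conjPart L ((i : ℕ) + 1) : ℤ) + (j' : ℤ) - (i : ℤ))) i.succ.succ 0 *
      Matrix.det ((Matrix.of (fun i j' : Fin (j + 1 + 1) =>
        esym ((conjPart L ((i : ℕ) + 1) : ℤ) + (j' : ℤ) - (i : ℤ)))).submatrix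
        i.succ.succ.succAbove Fin.succ)) = 0 := by
    intro i
    have hv : ((i.succ.succ : Fin (j + 1 + 1)) : ℕ) = (i : ℕ) + 2 := by simp [Fin.val_succ]
    have hz : (Matrix.of (fun i j' : Fin (j + 1 + 1) =>
        esym ((conjPart L ((i : ℕ) + 1) : ℤ) + (j' : ℤ) - (i : ℤ)))) i.succ.succ 0 = 0 := by
      simp only [Matrix.of_apply, hv]
      rw [hc ((i : ℕ) + 2 + 1) (by omega)]
      rw [if_neg (by omega), if_pos (by omega : (i : ℕ) + 2 + 1 ≤ j + 2)]
      apply esym_neg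
      have h0 : (((0 : Fin (j + 1 + 1)) : ℕ) : ℤ) = 0 := by norm_num
      rw [h0]
      push_cast
      omega
    rw [hz]
    ring
  rw [Finset.sum_eq_zero fun i _ => h2 i]
  have sub0 : ((Matrix.of (fun i j' : Fin (j + 1 + 1) =>
        esym ((conjPart L ((i : ℕ) + 1) : ℤ) + (j' : ℤ) - (i : ℤ)))).submatrix
        (0 : Fin (j + 1 + 1)).succAbove Fin.succ) =
      Matrix.of (fun i j' : Fin (j + 1) =>
        if (i : ℕ) = 0 then esym ((k : ℤ) + (j' : ℤ)) else esym ((j' : ℤ) + 1 - (i : ℤ))) := by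
    refine Matrix.ext fun i j' => ?_
    rw [Fin.succAbove_zero]
    simp only [Matrix.submatrix_apply, Matrix.of_apply, Fin.val_succ]
    rw [hc ((i : ℕ) + 1 + 1) (by omega)]
    by_cases h : (i : ℕ) = 0
    · rw [if_pos (by omega), if_pos h]
      congr 1
      have : ((i : ℕ) : ℤ) = 0 := by exact_mod_cast h
      push_cast
      rw [this]
      ring
    · rw [if_neg (by omega), if_pos (by omega : (i : ℕ) + 1 + 1 ≤ j + 2), if_neg h]
      congr 1
      push_cast
      ring
  have sub1 : ((Matrix.of (fun i j' : Fin (j + 1 + 1) =>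
        esym ((conjPart L ((i : ℕ) + 1) : ℤ) + (j' : ℤ) - (i : ℤ)))).submatrix
        ((0 : Fin (j + 1)).succ).succAbove Fin.succ) =
      Matrix.of (fun i j' : Fin (j + 1) =>
        if (i : ℕ) = 0 then esym ((k : ℤ) + 1 + (j' : ℤ)) else esym ((j' : ℤ) + 1 - (i : ℤ))) := by
    refine Matrix.ext fun i j' => ?_
    refine Fin.cases ?_ ?_ i
    · have h : ((0 : Fin (j + 1)).succ).succAbove (0 : Fin (j + 1)) = 0 := by
        simp [Fin.succAbove, Fin.lt_def]
      rw [Matrix.submatrix_apply, h]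
      simp only [Matrix.of_apply, Fin.val_succ, Fin.val_zero, if_pos rfl]
      rw [hc (0 + 1) (by omega), if_pos (by omega)]
      congr 1
      push_cast
      ring
    · intro i
      have h : ((0 : Fin (j + 1)).succ).succAbove i.succ = i.succ.succ := by
        simp [Fin.succAbove, Fin.lt_def]
      rw [Matrix.submatrix_apply, h]
      simp only [Matrix.of_apply, Fin.val_succ]
      rw [hc ((i : ℕ) + 1 + 1 + 1) (by omega), if_neg (by omega), if_neg (Nat.succ_ne_zero _)]
      by_cases hij : (i : ℕ) + 1 + 1 + 1 ≤ j + 2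
      · rw [if_pos hij]
        congr 1
        push_cast
        ring
      · exfalso
        have := i.isLt
        omega
  rw [sub0, sub1]
  have e00 : (Matrix.of (fun i j' : Fin (j + 1 + 1) =>
      esym ((conjPart L ((i : ℕ) + 1) : ℤ) + (j' : ℤ) - (i : ℤ)))) 0 0 = esym (k : ℤ) := by
    simp only [Matrix.of_apply, Fin.val_zero]
    rw [hc 1 (by omega), if_pos (by omega)]
    norm_num
  have e10 : (Matrix.of (fun i j' : Fin (j + 1 + 1) =>
      esym ((conjPart L ((i : ℕ) + 1) : ℤ) + (j' : ℤ) - (i : ℤ)))) (Fin.succ 0) 0 = esym ((k : ℤ) - 1) := by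
    simp only [Matrix.of_apply, Fin.val_succ, Fin.val_zero]
    rw [hc (0 + 1 + 1) (by omega), if_pos (by omega)]
    norm_num
  rw [e00, e10]
  simp only [Gd, Fin.val_zero, Fin.val_succ, pow_zero, pow_one]
  ring

lemma schurR (m k : ℕ) (hk : 1 ≤ k) :
    schur (List.replicate k 2 ++ List.replicate m 1)
      = esym ((k : ℤ) + (m : ℕ)) * esym (k : ℤ)
        - esym ((k : ℤ) + (m : ℕ) + 1) * esym ((k : ℤ) - 1) := by
  obtain ⟨k', rfl⟩ : ∃ k', k = k' + 1 := ⟨k - 1, by omega⟩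
  set L := List.replicate (k' + 1) 2 ++ List.replicate m 1 with hLdef
  have hc1 : conjPart L 1 = k' + 1 + m := by
    rw [hLdef, conjPart_eq, conjPart'_append, conjPart'_replicate, conjPart'_replicate]
    norm_num
  have hc2 : conjPart L 2 = k' + 1 := by
    rw [hLdef, conjPart_eq, conjPart'_append, conjPart'_replicate, conjPart'_replicate]
    norm_num
  have hA : schur L = Matrix.det (Matrix.of fun i j' : Fin 2 =>
      esym ((conjPart L ((i : ℕ) + 1) : ℤ) + (j' : ℤ) - (i : ℤ))) := rfl
  rw [hA, Matrix.det_fin_two]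
  simp only [Matrix.of_apply, Fin.val_zero, Fin.val_one]
  rw [hc1, hc2]
  push_cast
  ring_nf

/-- The alternating Pieri sum identity
`∑_{j=0}^m (−1)^j e_{m−j} s_{(j+2, 2^{k−1})} = s_{(2^k, 1^m)}`. -/
theorem alternating_pieri_sum (m k : ℕ) (hk : 1 ≤ k) :
    ∑ j ∈ Finset.range (m + 1),
        ((-1 : SymFn) ^ j * esym ((m - j : ℕ) : ℤ) *
          schur ((j + 2) :: List.replicate (k - 1) 2)) =
      schur (List.replicate k 2 ++ List.replicate m 1) := by

  rw [schurR m k hk]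
  have step : ∀ j ∈ Finset.range (m + 1),
      (-1 : SymFn) ^ j * esym ((m - j : ℕ) : ℤ) * schur ((j + 2) :: List.replicate (k - 1) 2)
      = esym (k : ℤ) * ((-1) ^ j * esym ((m - j : ℕ) : ℤ) *
            Gd (j + 1) (fun c => esym ((k : ℤ) + (c : ℤ))))
        - esym ((k : ℤ) - 1) * ((-1) ^ j * esym ((m - j : ℕ) : ℤ) *
            Gd (j + 1) (fun c => esym (((k : ℤ) + 1) + (c : ℤ)))) := by
    intro j _
    rw [schurL j k hk]
    have : (fun c : ℕ => esym ((k : ℤ) + 1 + (c : ℤ))) = fun c : ℕ => esym (((k : ℤ) + 1) + (c : ℤ)) := rfl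
    rw [this]
    ring
  rw [Finset.sum_congr rfl step, Finset.sum_sub_distrib, ← Finset.mul_sum, ← Finset.mul_sum,
    Ssum m (k : ℤ), Ssum m ((k : ℤ) + 1)]
  ring
end
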